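/- If n+1 ≡ 2 (mod 4), then f_0(n) ≥ √(n+1)/(2·cos(π/(2(n+1)))). -/

import Mathlib

open Real Matrix

/-- `simplexInCube n ℓ` : an isometric copy of the regular n-simplex of edge length ℓ
with barycenter at the origin is contained in the cube [-1/2, 1/2]ⁿ. -/
def simplexInCube (n : ℕ) (ℓ : ℝ) : Prop :=
  ∃ p : Fin (n + 1) → EuclideanSpace ℝ (Fin n),
    (∀ i j, i ≠ j → dist (p i) (p j) = ℓ) ∧ (∑ i, p i = 0) ∧
    ∀ i k, |p i k| ≤ 1 / 2

/-- `f0 n` : the largest edge length of a regular n-simplex with barycenter at the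
origin contained in the unit cube. -/
noncomputable def f0 (n : ℕ) : ℝ := sSup {ℓ : ℝ | simplexInCube n ℓ}

/-!
Write `N = n + 1` and `ω = 2π/N`. The points `v_j = (cos (ω j k + π/4))_{k=1..n}`, `j < N`, are
the real parts of the rows of the Fourier matrix rotated by `π/4`, with its constant column
`k = 0` dropped (it contributes nothing to differences). Orthogonality of the characters of
`ℤ/N` gives `∑ v_j = 0` and `|v_i - v_j|² = N` for `i ≠ j`, so they form a regular simplex of
edge `√N` centred at the origin. When `N ≡ 2 (mod 4)` every angle `ω j k + π/4` is an odd
multiple of `π/(2N)`, hence stays at distance at least `π/(2N)` from `πℤ`; so all coordinates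
are bounded by `cos (π/(2N))`, and scaling by `1/(2 cos (π/(2N)))` puts the simplex into the
unit cube.
-/

theorem sum_range_cos_two_pi_mul_div_add (N : ℕ) (t : ℤ) (φ : ℝ) :
    ∑ k ∈ Finset.range N, cos (2 * π * t * k / N + φ) =
      if (N : ℤ) ∣ t then N * cos φ else 0 := by
  rcases N.eq_zero_or_pos with rfl | hN
  · simp
  split_ifs with h
  · obtain ⟨m, rfl⟩ := h
    have hangle (k : ℕ) :
        2 * π * ((N * m : ℤ) : ℝ) * k / N + φ = φ + (m * k : ℤ) * (2 * π) := by
      push_cast; field_simp; ring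
    simp only [hangle, cos_add_int_mul_two_pi, Finset.sum_const, Finset.card_range, nsmul_eq_mul]
  · have hN : (N : ℂ) ≠ 0 := by exact_mod_cast hN.ne'
    set z := Complex.exp (2 * π * Complex.I * t / N)
    have hz : z ≠ 1 := by
      intro hz
      obtain ⟨m, hm⟩ := Complex.exp_eq_one_iff.mp hz
      refine h ⟨m, ?_⟩
      have : (t : ℂ) = N * m := by
        field_simp at hm
        exact hm
      exact_mod_cast this
    have hzN : z ^ N = 1 := by
      rw [← Complex.exp_nat_mul, mul_div_cancel₀ _ hN, mul_comm,
        Complex.exp_int_mul_two_pi_mul_I]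
    have hterm (k : ℕ) :
        cos (2 * π * t * k / N + φ) = (Complex.exp (φ * Complex.I) * z ^ k).re := by
      rw [← Complex.exp_nat_mul, ← Complex.exp_add, ← Complex.exp_ofReal_mul_I_re]
      congr 2; push_cast; field_simp; ring
    simp only [hterm, ← Complex.re_sum, ← Finset.mul_sum, geom_sum_eq hz, hzN, sub_self,
      zero_div, mul_zero, Complex.zero_re]

theorem sq_cos_sub_cos (x y : ℝ) :
    (cos x - cos y) ^ 2 = 1 + cos (2 * x) / 2 + cos (2 * y) / 2 - cos (x - y) - cos (x + y) := by
  rw [cos_sub, cos_add]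
  linear_combination cos_sq x + cos_sq y

theorem sum_range_sq_sub_cos_pi_div_four {N i j : ℕ} (hi : i < N) (hj : j < N) (hij : i ≠ j) :
    ∑ k ∈ Finset.range N,
      (cos (2 * π * i * k / N + π / 4) - cos (2 * π * j * k / N + π / 4)) ^ 2 = N := by
  have hterm (k : ℕ) :
      (cos (2 * π * i * k / N + π / 4) - cos (2 * π * j * k / N + π / 4)) ^ 2 =
        1 + cos (2 * π * (2 * i : ℤ) * k / N + π / 2) / 2
          + cos (2 * π * (2 * j : ℤ) * k / N + π / 2) / 2
          - cos (2 * π * (i - j : ℤ) * k / N + 0)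
          - cos (2 * π * (i + j : ℤ) * k / N + π / 2) := by
    set x := 2 * π * i * k / N + π / 4
    set y := 2 * π * j * k / N + π / 4
    have h2x : 2 * π * (2 * i : ℤ) * k / N + π / 2 = 2 * x := by push_cast; ring
    have h2y : 2 * π * (2 * j : ℤ) * k / N + π / 2 = 2 * y := by push_cast; ring
    have hsub : 2 * π * (i - j : ℤ) * k / N + 0 = x - y := by push_cast; ring
    have hadd : 2 * π * (i + j : ℤ) * k / N + π / 2 = x + y := by push_cast; ring
    rw [h2x, h2y, hsub, hadd, sq_cos_sub_cos]
  have hndvd : ¬ (N : ℤ) ∣ (i - j : ℤ) := fun h => hij <| by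
    have := Int.eq_zero_of_abs_lt_dvd h (abs_sub_lt_iff.mpr ⟨by omega, by omega⟩)
    omega
  simp only [hterm, Finset.sum_add_distrib, Finset.sum_sub_distrib, ← Finset.sum_div,
    sum_range_cos_two_pi_mul_div_add, hndvd, cos_pi_div_two]
  simp

theorem abs_cos_le_cos_of_le_of_le_pi_sub {a x : ℝ} (ha : 0 ≤ a) (hax : a ≤ x)
    (hxa : x ≤ π - a) : |cos x| ≤ cos a := by
  refine abs_le.mpr ⟨?_, cos_le_cos_of_nonneg_of_le_pi ha (by linarith) hax⟩
  have := cos_le_cos_of_nonneg_of_le_pi ha (by linarith) (le_sub_comm.mp hxa)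
  rw [cos_pi_sub] at this
  linarith

theorem abs_cos_odd_mul_pi_div_le {u : ℕ} (hu : Odd u) (N : ℕ) :
    |cos (u * π / (2 * N))| ≤ cos (π / (2 * N)) := by
  rcases N.eq_zero_or_pos with rfl | hN
  · simp
  obtain ⟨q, r, hr, rfl⟩ : ∃ q r, r < 2 * N ∧ u = r + 2 * N * q :=
    ⟨u / (2 * N), u % (2 * N), Nat.mod_lt _ (by omega), (Nat.mod_add_div u (2 * N)).symm⟩
  have hr1 : (1 : ℝ) ≤ r := by
    have : Odd r := by simpa [Nat.odd_add, Nat.even_mul] using hu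
    exact_mod_cast this.pos
  have hrN : (r : ℝ) + 1 ≤ 2 * N := by exact_mod_cast hr
  have hangle : ((r + 2 * N * q : ℕ) : ℝ) * π / (2 * N) = r * π / (2 * N) + q * π := by
    push_cast; field_simp
  rw [hangle, cos_add_nat_mul_pi, abs_mul, abs_pow, abs_neg, abs_one, one_pow, one_mul]
  apply abs_cos_le_cos_of_le_of_le_pi_sub (by positivity)
  · gcongr
    nlinarith [pi_pos]
  · rw [le_sub_iff_add_le, ← add_div, div_le_iff₀ (by positivity)]
    nlinarith [pi_pos]

noncomputable def trigVertex (n : ℕ) (j : Fin (n + 1)) : EuclideanSpace ℝ (Fin n) :=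
  WithLp.toLp 2 fun k => cos (2 * π * (j : ℕ) * ((k : ℕ) + 1) / (n + 1) + π / 4)

theorem dist_trigVertex {n : ℕ} {i j : Fin (n + 1)} (hij : i ≠ j) :
    dist (trigVertex n i) (trigVertex n j) = √(n + 1) := by
  have h := sum_range_sq_sub_cos_pi_div_four i.isLt j.isLt (Fin.val_ne_of_ne hij)
  rw [Finset.sum_range_succ', ← Fin.sum_univ_eq_sum_range] at h
  push_cast at h
  rw [EuclideanSpace.dist_eq]
  congr 1
  simpa [trigVertex, Real.dist_eq, sq_abs] using h

theorem sum_trigVertex (n : ℕ) : ∑ j, trigVertex n j = 0 := by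
  ext k
  have hndvd : ¬ ((n + 1 : ℕ) : ℤ) ∣ ((k + 1 : ℕ) : ℤ) :=
    Int.natCast_dvd_natCast.not.mpr (Nat.not_dvd_of_pos_of_lt (by omega) (by omega))
  have h := sum_range_cos_two_pi_mul_div_add (n + 1) ((k + 1 : ℕ) : ℤ) (π / 4)
  rw [if_neg hndvd, ← Fin.sum_univ_eq_sum_range] at h
  push_cast at h
  simp only [trigVertex, WithLp.ofLp_sum, Finset.sum_apply, PiLp.zero_apply]
  rw [← h]
  congr! 2 with j
  ring

theorem abs_trigVertex_apply_le {n : ℕ} (hn : (n + 1) % 4 = 2) (j : Fin (n + 1)) (k : Fin n) :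
    |trigVertex n j k| ≤ cos (π / (2 * (n + 1))) := by
  obtain ⟨M, hM, hM_odd⟩ : ∃ M, n + 1 = 2 * M ∧ Odd M :=
    ⟨(n + 1) / 2, by omega, Nat.odd_iff.mpr (by omega)⟩
  have hu : Odd (4 * (j : ℕ) * ((k : ℕ) + 1) + M) :=
    Even.add_odd ⟨2 * j * (k + 1), by ring⟩ hM_odd
  have h := abs_cos_odd_mul_pi_div_le hu (n + 1)
  have hMR : (n : ℝ) + 1 = 2 * M := by exact_mod_cast hM
  have hM0 : (M : ℝ) ≠ 0 := by exact_mod_cast hM_odd.pos.ne'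
  push_cast at h
  simp only [trigVertex]
  convert h using 3
  rw [hMR]; field_simp; ring

theorem simplexInCube_div_two_mul {n : ℕ} (p : Fin (n + 1) → EuclideanSpace ℝ (Fin n))
    {d b : ℝ} (hb : 0 < b) (hdist : ∀ i j, i ≠ j → dist (p i) (p j) = d)
    (hsum : ∑ i, p i = 0) (hcoord : ∀ i k, |p i k| ≤ b) :
    simplexInCube n (d / (2 * b)) := by
  refine ⟨fun i => (2 * b)⁻¹ • p i, fun i j hij => ?_, ?_, fun i k => ?_⟩
  · rw [dist_smul₀, hdist i j hij, norm_inv, Real.norm_of_nonneg (by positivity), inv_mul_eq_div]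
  · rw [← Finset.smul_sum, hsum, smul_zero]
  · rw [PiLp.smul_apply, smul_eq_mul, abs_mul, abs_inv, abs_of_pos (by positivity : 0 < 2 * b)]
    calc (2 * b)⁻¹ * |p i k| ≤ (2 * b)⁻¹ * b := by gcongr; exact hcoord i k
      _ = 1 / 2 := by field_simp

theorem bddAbove_simplexInCube {n : ℕ} (hn : 0 < n) : BddAbove {ℓ | simplexInCube n ℓ} := by
  refine ⟨√n, ?_⟩
  rintro ℓ ⟨p, hdist, -, hcoord⟩
  rw [← hdist 0 (Fin.last n) (by simp [Fin.ext_iff]; omega), EuclideanSpace.dist_eq]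
  gcongr
  calc ∑ k, dist (p 0 k) (p (Fin.last n) k) ^ 2 ≤ ∑ _k : Fin n, (1 : ℝ) := by
        gcongr with k
        refine pow_le_one₀ dist_nonneg ?_
        rw [Real.dist_eq]
        linarith [abs_sub (p 0 k) (p (Fin.last n) k), hcoord 0 k, hcoord (Fin.last n) k]
    _ = n := by simp

/-- If n+1 ≡ 2 (mod 4), then f₀(n) ≥ √(n+1)/(2 cos(π/(2(n+1)))). -/
theorem stmt7 (n : ℕ) (hn : (n + 1) % 4 = 2) :
    f0 n ≥ Real.sqrt (n + 1) / (2 * Real.cos (Real.pi / (2 * (n + 1)))) := by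
  have hcos : 0 < cos (π / (2 * (n + 1))) := by
    have hpos : 0 < π / (2 * (n + 1)) := by positivity
    have hn1 : (1 : ℝ) ≤ n := by exact_mod_cast (by omega : 1 ≤ n)
    have hlt : π / (2 * (n + 1)) < π / 2 := div_lt_div_of_pos_left pi_pos two_pos (by linarith)
    exact cos_pos_of_mem_Ioo ⟨by linarith, hlt⟩
  exact le_csSup (bddAbove_simplexInCube (by omega))
    (simplexInCube_div_two_mul (trigVertex n) hcos (fun _ _ => dist_trigVertex)
      (sum_trigVertex n) (abs_trigVertex_apply_le hn))
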